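/- Let T > 0, γ, M ∈ ℝ, and let B : (0,T)×ℝ² → ℝ, v_S, v_L : (0,T)×ℝ² → ℝ², P : (0,T)×ℝ² → ℝ and Γ_B : (0,T)×ℝ² → ℝ be C¹ functions with 0 < B < 1 everywhere, satisfying on (0,T)×ℝ²: ∂ₜv_S + (v_S·∇)v_S + γ∇B/B + ∇P = (M+Γ_B)(v_L−v_S)/B and ∂ₜv_L + (v_L·∇)v_L + ∇P = M(v_S−v_L)/(1−B). Then w := B v_S + (1−B) v_L and z := v_S − v_L satisfy the relative velocity equation ∂ₜz + (w·∇)z + (z·∇)w + (z·∇)((1−B)z) − B(z·∇)z + γ∇B/B = −z·(M + Γ_B(1−B))/(B(1−B)). -/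

import Mathlib

/-- Partial derivative in the time variable `t` of a function on `(t, x₁, x₂)`-space. -/
noncomputable def pdt (f : ℝ × ℝ × ℝ → ℝ) (p : ℝ × ℝ × ℝ) : ℝ :=
  fderiv ℝ f p (1, 0, 0)

/-- Partial derivative in the first spatial variable `x₁`. -/
noncomputable def pdx (f : ℝ × ℝ × ℝ → ℝ) (p : ℝ × ℝ × ℝ) : ℝ :=
  fderiv ℝ f p (0, 1, 0)

/-- Partial derivative in the second spatial variable `x₂`. -/
noncomputable def pdy (f : ℝ × ℝ × ℝ → ℝ) (p : ℝ × ℝ × ℝ) : ℝ :=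
  fderiv ℝ f p (0, 0, 1)

/-- The space-time domain `(0,T) × ℝ²`, viewed as a subset of `ℝ × ℝ × ℝ`. -/
def dom (T : ℝ) : Set (ℝ × ℝ × ℝ) := {p | 0 < p.1 ∧ p.1 < T}

/-!
Subtracting the two momentum equations eliminates the pressure and gives
`∂ₜz + (v_S·∇)v_S − (v_L·∇)v_L + γ∇B/B = −(M + Γ_B) z/B − M z/(1−B)`.
Since `v_S = w + (1−B)z` and `v_L = w − Bz`, the product rule shows that
`(v_S·∇)v_S − (v_L·∇)v_L = (w·∇)z + (z·∇)w + (z·∇)((1−B)z) − B(z·∇)z`, direction by direction: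
the terms carrying derivatives of `B` cancel. The drag terms combine over the common
denominator `B(1−B)`.
-/

lemma isOpen_dom (T : ℝ) : IsOpen (dom T) :=
  isOpen_Ioo.preimage continuous_fst

/-- The convective derivative `(u·∇)f`. -/
noncomputable def advect (u1 u2 f : ℝ × ℝ × ℝ → ℝ) (p : ℝ × ℝ × ℝ) : ℝ :=
  u1 p * pdx f p + u2 p * pdy f p

section FDeriv

variable {E : Type*} [NormedAddCommGroup E] [NormedSpace ℝ E] {B f g : E → ℝ} {p : E}

lemma fderiv_one_sub_mul_apply (hB : DifferentiableAt ℝ B p) (hf : DifferentiableAt ℝ f p)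
    (v : E) :
    fderiv ℝ (fun q => (1 - B q) * f q) p v =
      (1 - B p) * fderiv ℝ f p v - fderiv ℝ B p v * f p := by
  rw [fderiv_fun_mul (hB.const_sub 1) hf, fderiv_const_sub]
  simp only [add_apply, smul_apply, neg_apply, smul_eq_mul]
  ring

lemma fderiv_weighted_add_apply (hB : DifferentiableAt ℝ B p) (hf : DifferentiableAt ℝ f p)
    (hg : DifferentiableAt ℝ g p) (v : E) :
    fderiv ℝ (fun q => B q * f q + (1 - B q) * g q) p v =
      B p * fderiv ℝ f p v + (1 - B p) * fderiv ℝ g p v + fderiv ℝ B p v * (f p - g p) := by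
  rw [fderiv_fun_add (f := fun q => B q * f q) (g := fun q => (1 - B q) * g q) (hB.mul hf)
      ((hB.const_sub 1).mul hg), add_apply, fderiv_one_sub_mul_apply hB hg, fderiv_fun_mul hB hf]
  simp only [add_apply, smul_apply, smul_eq_mul]
  ring

end FDeriv

section RelativeVelocity

variable {B vS1 vS2 vL1 vL2 fS fL : ℝ × ℝ × ℝ → ℝ} {p : ℝ × ℝ × ℝ}

lemma advect_sub_advect_eq (hB : DifferentiableAt ℝ B p) (hfS : DifferentiableAt ℝ fS p)
    (hfL : DifferentiableAt ℝ fL p) :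
    advect vS1 vS2 fS p - advect vL1 vL2 fL p =
      advect (fun q => B q * vS1 q + (1 - B q) * vL1 q)
          (fun q => B q * vS2 q + (1 - B q) * vL2 q) (fun q => fS q - fL q) p +
        advect (fun q => vS1 q - vL1 q) (fun q => vS2 q - vL2 q)
          (fun q => B q * fS q + (1 - B q) * fL q) p +
        advect (fun q => vS1 q - vL1 q) (fun q => vS2 q - vL2 q)
          (fun q => (1 - B q) * (fS q - fL q)) p -
        B p * advect (fun q => vS1 q - vL1 q) (fun q => vS2 q - vL2 q)
          (fun q => fS q - fL q) p := by
  simp only [advect, pdx, pdy, fderiv_fun_sub hfS hfL, sub_apply,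
    fderiv_one_sub_mul_apply (f := fun q => fS q - fL q) hB (hfS.sub hfL),
    fderiv_weighted_add_apply hB hfS hfL]
  ring

lemma relativeVelocity_component (γ M : ℝ) (P ΓB : ℝ × ℝ × ℝ → ℝ) (d : ℝ × ℝ × ℝ)
    (hB : DifferentiableAt ℝ B p) (hfS : DifferentiableAt ℝ fS p)
    (hfL : DifferentiableAt ℝ fL p) (hB0 : B p ≠ 0) (hB1 : 1 - B p ≠ 0)
    (hS : pdt fS p + advect vS1 vS2 fS p + γ * fderiv ℝ B p d / B p + fderiv ℝ P p d =
      (M + ΓB p) * (fL p - fS p) / B p)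
    (hL : pdt fL p + advect vL1 vL2 fL p + fderiv ℝ P p d = M * (fS p - fL p) / (1 - B p)) :
    pdt (fun q => fS q - fL q) p +
        advect (fun q => B q * vS1 q + (1 - B q) * vL1 q)
          (fun q => B q * vS2 q + (1 - B q) * vL2 q) (fun q => fS q - fL q) p +
        advect (fun q => vS1 q - vL1 q) (fun q => vS2 q - vL2 q)
          (fun q => B q * fS q + (1 - B q) * fL q) p +
        advect (fun q => vS1 q - vL1 q) (fun q => vS2 q - vL2 q)
          (fun q => (1 - B q) * (fS q - fL q)) p -
        B p * advect (fun q => vS1 q - vL1 q) (fun q => vS2 q - vL2 q)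
          (fun q => fS q - fL q) p +
        γ * fderiv ℝ B p d / B p =
      -((fS p - fL p) * (M + ΓB p * (1 - B p))) / (B p * (1 - B p)) := by
  have hzt : pdt (fun q => fS q - fL q) p = pdt fS p - pdt fL p := by
    simp only [pdt, fderiv_fun_sub hfS hfL, sub_apply]
  calc _ = (pdt fS p + advect vS1 vS2 fS p + γ * fderiv ℝ B p d / B p) -
          (pdt fL p + advect vL1 vL2 fL p) := by
        rw [hzt]
        linear_combination -(advect_sub_advect_eq (vS1 := vS1) (vS2 := vS2) (vL1 := vL1)
          (vL2 := vL2) hB hfS hfL)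
    _ = (M + ΓB p) * (fL p - fS p) / B p - M * (fS p - fL p) / (1 - B p) := by
        linear_combination hS - hL
    _ = _ := by
        field_simp
        ring

end RelativeVelocity

theorem stmt8_general (T γ M : ℝ)
    (B vS1 vS2 vL1 vL2 P ΓB : ℝ × ℝ × ℝ → ℝ)
    (hBreg : ContDiffOn ℝ 1 B (dom T)) (hvS1 : ContDiffOn ℝ 1 vS1 (dom T))
    (hvS2 : ContDiffOn ℝ 1 vS2 (dom T)) (hvL1 : ContDiffOn ℝ 1 vL1 (dom T))
    (hvL2 : ContDiffOn ℝ 1 vL2 (dom T))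
    (hB0 : ∀ p ∈ dom T, 0 < B p) (hB1 : ∀ p ∈ dom T, B p < 1)
    (hmomS1 : ∀ p ∈ dom T,
      pdt vS1 p + (vS1 p * pdx vS1 p + vS2 p * pdy vS1 p) + γ * pdx B p / B p + pdx P p =
        (M + ΓB p) * (vL1 p - vS1 p) / B p)
    (hmomS2 : ∀ p ∈ dom T,
      pdt vS2 p + (vS1 p * pdx vS2 p + vS2 p * pdy vS2 p) + γ * pdy B p / B p + pdy P p =
        (M + ΓB p) * (vL2 p - vS2 p) / B p)
    (hmomL1 : ∀ p ∈ dom T,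
      pdt vL1 p + (vL1 p * pdx vL1 p + vL2 p * pdy vL1 p) + pdx P p =
        M * (vS1 p - vL1 p) / (1 - B p))
    (hmomL2 : ∀ p ∈ dom T,
      pdt vL2 p + (vL1 p * pdx vL2 p + vL2 p * pdy vL2 p) + pdy P p =
        M * (vS2 p - vL2 p) / (1 - B p))
    (w1 w2 z1 z2 : ℝ × ℝ × ℝ → ℝ)
    (hw1 : w1 = fun q => B q * vS1 q + (1 - B q) * vL1 q)
    (hw2 : w2 = fun q => B q * vS2 q + (1 - B q) * vL2 q)
    (hz1 : z1 = fun q => vS1 q - vL1 q) (hz2 : z2 = fun q => vS2 q - vL2 q) :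
    ∀ p ∈ dom T,
      (pdt z1 p + (w1 p * pdx z1 p + w2 p * pdy z1 p) +
        (z1 p * pdx w1 p + z2 p * pdy w1 p) +
        (z1 p * pdx (fun q => (1 - B q) * z1 q) p +
          z2 p * pdy (fun q => (1 - B q) * z1 q) p) -
        B p * (z1 p * pdx z1 p + z2 p * pdy z1 p) + γ * pdx B p / B p =
        -(z1 p * (M + ΓB p * (1 - B p))) / (B p * (1 - B p))) ∧
      (pdt z2 p + (w1 p * pdx z2 p + w2 p * pdy z2 p) +
        (z1 p * pdx w2 p + z2 p * pdy w2 p) +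
        (z1 p * pdx (fun q => (1 - B q) * z2 q) p +
          z2 p * pdy (fun q => (1 - B q) * z2 q) p) -
        B p * (z1 p * pdx z2 p + z2 p * pdy z2 p) + γ * pdy B p / B p =
        -(z2 p * (M + ΓB p * (1 - B p))) / (B p * (1 - B p))) := by
  subst hw1 hw2 hz1 hz2
  intro p hp
  have hdiff (f : ℝ × ℝ × ℝ → ℝ) (hf : ContDiffOn ℝ 1 f (dom T)) : DifferentiableAt ℝ f p :=
    (hf.differentiableOn one_ne_zero).differentiableAt ((isOpen_dom T).mem_nhds hp)
  have hB0p : B p ≠ 0 := (hB0 p hp).ne'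
  have hB1p : 1 - B p ≠ 0 := sub_ne_zero.mpr (hB1 p hp).ne'
  exact ⟨relativeVelocity_component γ M P ΓB (0, 1, 0) (hdiff B hBreg) (hdiff vS1 hvS1)
      (hdiff vL1 hvL1) hB0p hB1p (hmomS1 p hp) (hmomL1 p hp),
    relativeVelocity_component γ M P ΓB (0, 0, 1) (hdiff B hBreg) (hdiff vS2 hvS2)
      (hdiff vL2 hvL2) hB0p hB1p (hmomS2 p hp) (hmomL2 p hp)⟩

/-- If `(B, v_S, v_L, P)` is a `C¹` solution of the two momentum equations of the
two-phase system on `(0,T) × ℝ²` with `0 < B < 1`, then `w := B v_S + (1−B) v_L` and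
`z := v_S − v_L` satisfy the relative velocity equation
`∂ₜz + (w·∇)z + (z·∇)w + (z·∇)((1−B)z) − B(z·∇)z + γ∇B/B = −z(M + Γ_B(1−B))/(B(1−B))`. -/
theorem stmt8 (T γ M : ℝ) (hT : 0 < T)
    (B vS1 vS2 vL1 vL2 P ΓB : ℝ × ℝ × ℝ → ℝ)
    (hBreg : ContDiffOn ℝ 1 B (dom T)) (hvS1 : ContDiffOn ℝ 1 vS1 (dom T))
    (hvS2 : ContDiffOn ℝ 1 vS2 (dom T)) (hvL1 : ContDiffOn ℝ 1 vL1 (dom T))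
    (hvL2 : ContDiffOn ℝ 1 vL2 (dom T)) (hP : ContDiffOn ℝ 1 P (dom T))
    (hΓ : ContDiffOn ℝ 1 ΓB (dom T))
    (hB0 : ∀ p ∈ dom T, 0 < B p) (hB1 : ∀ p ∈ dom T, B p < 1)
    (hmomS1 : ∀ p ∈ dom T,
      pdt vS1 p + (vS1 p * pdx vS1 p + vS2 p * pdy vS1 p) + γ * pdx B p / B p + pdx P p =
        (M + ΓB p) * (vL1 p - vS1 p) / B p)
    (hmomS2 : ∀ p ∈ dom T,
      pdt vS2 p + (vS1 p * pdx vS2 p + vS2 p * pdy vS2 p) + γ * pdy B p / B p + pdy P p =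
        (M + ΓB p) * (vL2 p - vS2 p) / B p)
    (hmomL1 : ∀ p ∈ dom T,
      pdt vL1 p + (vL1 p * pdx vL1 p + vL2 p * pdy vL1 p) + pdx P p =
        M * (vS1 p - vL1 p) / (1 - B p))
    (hmomL2 : ∀ p ∈ dom T,
      pdt vL2 p + (vL1 p * pdx vL2 p + vL2 p * pdy vL2 p) + pdy P p =
        M * (vS2 p - vL2 p) / (1 - B p))
    (w1 w2 z1 z2 : ℝ × ℝ × ℝ → ℝ)
    (hw1 : w1 = fun q => B q * vS1 q + (1 - B q) * vL1 q)
    (hw2 : w2 = fun q => B q * vS2 q + (1 - B q) * vL2 q)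
    (hz1 : z1 = fun q => vS1 q - vL1 q) (hz2 : z2 = fun q => vS2 q - vL2 q) :
    ∀ p ∈ dom T,
      (pdt z1 p + (w1 p * pdx z1 p + w2 p * pdy z1 p) +
        (z1 p * pdx w1 p + z2 p * pdy w1 p) +
        (z1 p * pdx (fun q => (1 - B q) * z1 q) p +
          z2 p * pdy (fun q => (1 - B q) * z1 q) p) -
        B p * (z1 p * pdx z1 p + z2 p * pdy z1 p) + γ * pdx B p / B p =
        -(z1 p * (M + ΓB p * (1 - B p))) / (B p * (1 - B p))) ∧
      (pdt z2 p + (w1 p * pdx z2 p + w2 p * pdy z2 p) +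
        (z1 p * pdx w2 p + z2 p * pdy w2 p) +
        (z1 p * pdx (fun q => (1 - B q) * z2 q) p +
          z2 p * pdy (fun q => (1 - B q) * z2 q) p) -
        B p * (z1 p * pdx z2 p + z2 p * pdy z2 p) + γ * pdy B p / B p =
        -(z2 p * (M + ΓB p * (1 - B p))) / (B p * (1 - B p))) :=
  stmt8_general T γ M B vS1 vS2 vL1 vL2 P ΓB hBreg hvS1 hvS2 hvL1 hvL2 hB0 hB1 hmomS1 hmomS2 hmomL1
    hmomL2 w1 w2 z1 z2 hw1 hw2 hz1 hz2
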